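/- arXiv:1409.5378 — 4 statements merged into one kernel-verified Lean document; each statement's English description precedes it below -/
import Mathlib

section
/- Fix z₀ ∈ Δ with z₀ ≠ 0 and define f₀(z) = (1−|z₀|²)(−1/conj(z₀))[z + (1/conj(z₀))Log(1−conj(z₀)z)], where Log is the principal branch of the logarithm. Then f₀ ∈ 𝒵₀^{(0,1)}, f₀''(z) = (1−|z₀|²)/(1−conj(z₀)z)² for all z ∈ Δ, and the function F₀(z) = (1−|z|²)f₀''(z) satisfies F₀(z₀) = 1 and |F₀(z)| < 1 for every z ∈ Δ with z ≠ z₀; in particular ‖f₀‖_𝒵 = 1. -/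
open Complex MeasureTheory

noncomputable section

/-- The open unit disc in the complex plane. -/
def unitDisc : Set ℂ := Metric.ball 0 1

/-- `(1-|z|²)|f''(z)| → 0` as `|z| → 1⁻`. -/
def ZygVanish (f : ℂ → ℂ) : Prop :=
  ∀ ε > 0, ∃ r : ℝ, r < 1 ∧ ∀ z : ℂ, r < ‖z‖ → ‖z‖ < 1 →
    (1 - ‖z‖ ^ 2) * ‖deriv (deriv f) z‖ < ε

/-- Membership in the little Zygmund space `𝒵₀`: `f` is analytic (holomorphic) on the open
unit disc, continuous on the closed unit disc, and `(1-|z|²)|f''(z)| → 0` as `|z| → 1⁻`. -/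
def MemZ0 (f : ℂ → ℂ) : Prop :=
  DifferentiableOn ℂ f unitDisc ∧ ContinuousOn f (Metric.closedBall 0 1) ∧ ZygVanish f

/-- Membership in the subspace `𝒵₀^{(0,1)} = {f ∈ 𝒵₀ : f(0) = f'(0) = 0}`. -/
def MemZ01 (f : ℂ → ℂ) : Prop :=
  MemZ0 f ∧ f 0 = 0 ∧ deriv f 0 = 0

/-- `sup_{|z|<1} (1-|z|²)|f''(z)|`, the norm of `𝒵₀^{(0,1)}`. -/
noncomputable def zygSup (f : ℂ → ℂ) : ℝ :=
  sSup ((fun z => (1 - ‖z‖ ^ 2) * ‖deriv (deriv f) z‖) '' unitDisc)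

/-- The Zygmund norm `‖f‖_𝒵 = |f(0)| + |f'(0)| + sup_{|z|<1}(1-|z|²)|f''(z)|`. -/
noncomputable def zygNorm (f : ℂ → ℂ) : ℝ :=
  ‖f 0‖ + ‖deriv f 0‖ + zygSup f

/-- A disc automorphism: `σ(z) = λ(z-a)/(1 - conj(a) z)` on `Δ`, with `|λ| = 1`, `|a| < 1`. -/
def IsDiscAut (σ : ℂ → ℂ) : Prop :=
  ∃ lam a : ℂ, ‖lam‖ = 1 ∧ ‖a‖ < 1 ∧
    ∀ z ∈ unitDisc, σ z = lam * (z - a) / (1 - (starRingEnd ℂ) a * z)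

/-- `∫₀^z g(ξ) dξ`, the integral taken along the segment from `0` to `z`. -/
noncomputable def segIntegral (g : ℂ → ℂ) (z : ℂ) : ℂ :=
  z * ∫ t in (0:ℝ)..1, g ((t : ℂ) * z)

/-!
Differentiating twice gives `f₀''(z) = (1-|z₀|²)/(1-z̄₀z)²`. Since `|z̄₀z| ≤ |z₀| < 1` on the
closed disc, `f₀` is holomorphic on a neighbourhood of it and `f₀''` is bounded there, which forces
`(1-|z|²)f₀''(z) → 0` at the boundary. The sharp bound comes from the identity
`|1 - z̄₀z|² = (1-|z|²)(1-|z₀|²) + |z-z₀|²`: it gives `|F₀(z)| < 1` for `z ≠ z₀`, while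
`F₀(z₀) = 1` directly.
-/

open ComplexConjugate Topology

lemma mem_unitDisc {z : ℂ} : z ∈ unitDisc ↔ ‖z‖ < 1 := mem_ball_zero_iff

lemma norm_one_sub_ofReal_norm_sq {z : ℂ} (hz : ‖z‖ ≤ 1) :
    ‖1 - (‖z‖ : ℂ) ^ 2‖ = 1 - ‖z‖ ^ 2 := by
  rw [← ofReal_pow, ← ofReal_one, ← ofReal_sub, norm_real, Real.norm_of_nonneg]
  nlinarith [norm_nonneg z]

lemma norm_sq_one_sub_conj_mul (z w : ℂ) :
    ‖1 - conj w * z‖ ^ 2 = (1 - ‖z‖ ^ 2) * (1 - ‖w‖ ^ 2) + ‖z - w‖ ^ 2 := by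
  simp only [Complex.sq_norm, normSq_apply, sub_re, sub_im, one_re, one_im, mul_re, mul_im, conj_re,
    conj_im]
  ring

lemma one_sub_sq_mul_one_sub_sq_lt {z w : ℂ} (hzw : z ≠ w) :
    (1 - ‖z‖ ^ 2) * (1 - ‖w‖ ^ 2) < ‖1 - conj w * z‖ ^ 2 := by
  rw [norm_sq_one_sub_conj_mul]
  have : 0 < ‖z - w‖ := norm_pos_iff.mpr (sub_ne_zero.mpr hzw)
  nlinarith

lemma norm_one_sub_norm_sq_mul_div_lt_one {z w : ℂ} (hzw : z ≠ w) (hz : ‖z‖ ≤ 1) (hw : ‖w‖ ≤ 1) :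
    ‖(1 - (‖z‖ : ℂ) ^ 2) * ((1 - (‖w‖ : ℂ) ^ 2) / (1 - conj w * z) ^ 2)‖ < 1 := by
  have hlt := one_sub_sq_mul_one_sub_sq_lt hzw
  have hz' : 0 ≤ 1 - ‖z‖ ^ 2 := by nlinarith [norm_nonneg z]
  have hw' : 0 ≤ 1 - ‖w‖ ^ 2 := by nlinarith [norm_nonneg w]
  have hpos : 0 < ‖1 - conj w * z‖ ^ 2 := (mul_nonneg hz' hw').trans_lt hlt
  rw [norm_mul, norm_div, norm_pow, norm_one_sub_ofReal_norm_sq hz,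
    norm_one_sub_ofReal_norm_sq hw, ← mul_div_assoc, div_lt_one hpos]
  exact hlt

lemma one_sub_norm_sq_mul_div_self {w : ℂ} (hw : ‖w‖ < 1) :
    (1 - (‖w‖ : ℂ) ^ 2) * ((1 - (‖w‖ : ℂ) ^ 2) / (1 - conj w * w) ^ 2) = 1 := by
  have : (1 : ℂ) - (‖w‖ : ℂ) ^ 2 ≠ 0 := by
    rw [← ofReal_pow, ← ofReal_one, ← ofReal_sub, ofReal_ne_zero]
    nlinarith [norm_nonneg w]
  rw [conj_mul']
  field_simp

lemma sub_norm_le_norm_one_sub_mul {a z : ℂ} (hz : ‖z‖ ≤ 1) : 1 - ‖a‖ ≤ ‖1 - a * z‖ := by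
  have : ‖a * z‖ ≤ ‖a‖ := by
    rw [norm_mul]; exact mul_le_of_le_one_right (norm_nonneg a) hz
  have := norm_sub_norm_le (1 : ℂ) (a * z)
  rw [norm_one] at this
  linarith

lemma norm_div_one_sub_mul_sq_le {a z : ℂ} (c : ℂ) (ha : ‖a‖ < 1) (hz : ‖z‖ ≤ 1) :
    ‖c / (1 - a * z) ^ 2‖ ≤ ‖c‖ / (1 - ‖a‖) ^ 2 := by
  rw [norm_div, norm_pow]
  gcongr
  exact sub_norm_le_norm_one_sub_mul hz

lemma zygVanish_of_norm_deriv_deriv_le {f : ℂ → ℂ} {M : ℝ}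
    (hM : ∀ z ∈ unitDisc, ‖deriv (deriv f) z‖ ≤ M) : ZygVanish f := by
  intro ε hε
  set M' := max M 1
  have hM' : 0 < M' := lt_max_of_lt_right one_pos
  have hδ : 0 < ε / (2 * M') := by positivity
  refine ⟨1 - ε / (2 * M'), by linarith, fun z hzr hz1 => ?_⟩
  have hweight : 1 - ‖z‖ ^ 2 < ε / M' := by
    have : ε / M' = 2 * (ε / (2 * M')) := by field_simp
    nlinarith [norm_nonneg z]
  calc (1 - ‖z‖ ^ 2) * ‖deriv (deriv f) z‖ ≤ (1 - ‖z‖ ^ 2) * M' := by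
        gcongr
        · nlinarith [norm_nonneg z]
        · exact (hM z (mem_unitDisc.mpr hz1)).trans (le_max_left _ _)
    _ < ε / M' * M' := by gcongr
    _ = ε := div_mul_cancel₀ ε hM'.ne'

lemma zygSup_eq_one {f : ℂ → ℂ} {w : ℂ} (hw : w ∈ unitDisc)
    (hpeak : (1 - (‖w‖ : ℂ) ^ 2) * deriv (deriv f) w = 1)
    (hle : ∀ z ∈ unitDisc, ‖(1 - (‖z‖ : ℂ) ^ 2) * deriv (deriv f) z‖ ≤ 1) :
    zygSup f = 1 := by
  have hweight : ∀ z ∈ unitDisc, (1 - ‖z‖ ^ 2) * ‖deriv (deriv f) z‖ =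
      ‖(1 - (‖z‖ : ℂ) ^ 2) * deriv (deriv f) z‖ := fun z hz => by
    rw [norm_mul, norm_one_sub_ofReal_norm_sq (mem_unitDisc.mp hz).le]
  refine IsGreatest.csSup_eq ⟨⟨w, hw, (hweight w hw).trans (by rw [hpeak, norm_one])⟩, ?_⟩
  rintro _ ⟨z, hz, rfl⟩
  exact (hweight z hz).trans_le (hle z hz)

section LogPrimitive

variable {a z : ℂ}

lemma hasDerivAt_add_div_mul_log_one_sub_mul (ha : a ≠ 0) (hz : 1 - a * z ∈ slitPlane) :
    HasDerivAt (fun w => w + 1 / a * log (1 - a * w)) (1 - (1 - a * z)⁻¹) z := by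
  have hlin : HasDerivAt (fun w : ℂ => 1 - a * w) (-a) z := by
    simpa using ((hasDerivAt_id z).const_mul a).const_sub 1
  refine ((hasDerivAt_id z).add ((hlin.clog hz).const_mul (1 / a))).congr_deriv ?_
  have := slitPlane_ne_zero hz
  field_simp
  ring

lemma hasDerivAt_one_sub_inv_one_sub_mul (hz : 1 - a * z ≠ 0) :
    HasDerivAt (fun w => 1 - (1 - a * w)⁻¹) (-a / (1 - a * z) ^ 2) z := by
  have hlin : HasDerivAt (fun w : ℂ => 1 - a * w) (-a) z := by
    simpa using ((hasDerivAt_id z).const_mul a).const_sub 1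
  refine ((hlin.inv hz).const_sub 1).congr_deriv ?_
  ring

lemma one_sub_mul_mem_slitPlane (hz : ‖a * z‖ < 1) : 1 - a * z ∈ slitPlane := by
  simpa [sub_eq_add_neg] using mem_slitPlane_of_norm_lt_one (z := -(a * z)) (by rwa [norm_neg])

lemma deriv_deriv_add_div_mul_log_one_sub_mul (ha : a ≠ 0) (hz : ‖a * z‖ < 1) :
    deriv (deriv fun w => w + 1 / a * log (1 - a * w)) z = -a / (1 - a * z) ^ 2 := by
  have hderiv : deriv (fun w => w + 1 / a * log (1 - a * w)) =ᶠ[𝓝 z]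
      fun w => 1 - (1 - a * w)⁻¹ := by
    have hopen : IsOpen {w : ℂ | ‖a * w‖ < 1} := isOpen_lt (by fun_prop) continuous_const
    filter_upwards [hopen.mem_nhds hz] with w hw
    exact (hasDerivAt_add_div_mul_log_one_sub_mul ha (one_sub_mul_mem_slitPlane hw)).deriv
  rw [hderiv.deriv_eq]
  exact (hasDerivAt_one_sub_inv_one_sub_mul
    (slitPlane_ne_zero (one_sub_mul_mem_slitPlane hz))).deriv

end LogPrimitive

def peakFunction (z₀ : ℂ) : ℂ → ℂ := fun z =>
  (1 - (‖z₀‖ : ℂ) ^ 2) * (-(1 / conj z₀)) * (z + 1 / conj z₀ * log (1 - conj z₀ * z))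

section PeakFunction

variable {z₀ : ℂ}

lemma norm_conj_mul_lt_one (hz₀ : ‖z₀‖ < 1) {z : ℂ} (hz : ‖z‖ ≤ 1) : ‖conj z₀ * z‖ < 1 := by
  rw [norm_mul, norm_conj]
  exact mul_lt_one_of_nonneg_of_lt_one_left (norm_nonneg _) hz₀ hz

lemma hasDerivAt_peakFunction (hz₀0 : z₀ ≠ 0) {z : ℂ} (hz : ‖conj z₀ * z‖ < 1) :
    HasDerivAt (peakFunction z₀)
      ((1 - (‖z₀‖ : ℂ) ^ 2) * (-(1 / conj z₀)) * (1 - (1 - conj z₀ * z)⁻¹)) z :=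
  (hasDerivAt_add_div_mul_log_one_sub_mul ((map_ne_zero _).mpr hz₀0)
    (one_sub_mul_mem_slitPlane hz)).const_mul _

lemma deriv_deriv_peakFunction (hz₀0 : z₀ ≠ 0) {z : ℂ} (hz : ‖conj z₀ * z‖ < 1) :
    deriv (deriv (peakFunction z₀)) z = (1 - (‖z₀‖ : ℂ) ^ 2) / (1 - conj z₀ * z) ^ 2 := by
  have ha0 : conj z₀ ≠ 0 := (map_ne_zero _).mpr hz₀0
  unfold peakFunction
  rw [deriv_const_mul_field', deriv_const_mul_field']
  beta_reduce
  rw [deriv_deriv_add_div_mul_log_one_sub_mul ha0 hz]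
  field_simp

lemma memZ01_peakFunction (hz₀ : ‖z₀‖ < 1) (hz₀0 : z₀ ≠ 0) : MemZ01 (peakFunction z₀) := by
  have hderiv {z : ℂ} (hz : ‖z‖ ≤ 1) :=
    hasDerivAt_peakFunction hz₀0 (norm_conj_mul_lt_one hz₀ hz)
  refine ⟨⟨fun z hz => ?_, fun z hz => ?_, ?_⟩, by simp [peakFunction], ?_⟩
  · exact (hderiv (mem_unitDisc.mp hz).le).differentiableAt.differentiableWithinAt
  · exact (hderiv (mem_closedBall_zero_iff.mp hz)).continuousAt.continuousWithinAt
  · refine zygVanish_of_norm_deriv_deriv_le (M := ‖1 - (‖z₀‖ : ℂ) ^ 2‖ / (1 - ‖conj z₀‖) ^ 2)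
      fun z hz => ?_
    have hz1 := (mem_unitDisc.mp hz).le
    rw [deriv_deriv_peakFunction hz₀0 (norm_conj_mul_lt_one hz₀ hz1)]
    exact norm_div_one_sub_mul_sq_le _ (by rwa [norm_conj]) hz1
  · simp [(hderiv (z := 0) (by simp)).deriv]

lemma one_sub_norm_sq_mul_deriv_deriv_peakFunction_self (hz₀ : ‖z₀‖ < 1) (hz₀0 : z₀ ≠ 0) :
    (1 - (‖z₀‖ : ℂ) ^ 2) * deriv (deriv (peakFunction z₀)) z₀ = 1 := by
  rw [deriv_deriv_peakFunction hz₀0 (norm_conj_mul_lt_one hz₀ hz₀.le)]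
  exact one_sub_norm_sq_mul_div_self hz₀

lemma norm_one_sub_norm_sq_mul_deriv_deriv_peakFunction_lt_one (hz₀ : ‖z₀‖ < 1) (hz₀0 : z₀ ≠ 0)
    {z : ℂ} (hz : z ∈ unitDisc) (hne : z ≠ z₀) :
    ‖(1 - (‖z‖ : ℂ) ^ 2) * deriv (deriv (peakFunction z₀)) z‖ < 1 := by
  have hz1 := (mem_unitDisc.mp hz).le
  rw [deriv_deriv_peakFunction hz₀0 (norm_conj_mul_lt_one hz₀ hz1)]
  exact norm_one_sub_norm_sq_mul_div_lt_one hne hz1 hz₀.le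

lemma zygNorm_peakFunction (hz₀ : ‖z₀‖ < 1) (hz₀0 : z₀ ≠ 0) :
    zygNorm (peakFunction z₀) = 1 := by
  have hpeak := one_sub_norm_sq_mul_deriv_deriv_peakFunction_self hz₀ hz₀0
  have hsup : zygSup (peakFunction z₀) = 1 :=
    zygSup_eq_one (mem_unitDisc.mpr hz₀) hpeak fun z hz => by
      rcases eq_or_ne z z₀ with rfl | hne
      · rw [hpeak, norm_one]
      · exact (norm_one_sub_norm_sq_mul_deriv_deriv_peakFunction_lt_one hz₀ hz₀0 hz hne).le
  obtain ⟨-, hf0, hdf0⟩ := memZ01_peakFunction hz₀ hz₀0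
  rw [zygNorm, hf0, hdf0, hsup, norm_zero, zero_add, zero_add]

end PeakFunction

/-- For `z₀ ∈ Δ`, `z₀ ≠ 0`, the function
`f₀(z) = (1-|z₀|²)(-1/conj(z₀))[z + (1/conj(z₀)) Log(1 - conj(z₀) z)]` belongs to
`𝒵₀^{(0,1)}`, has `f₀''(z) = (1-|z₀|²)/(1-conj(z₀)z)²`, and `F₀(z) = (1-|z|²)f₀''(z)`
satisfies `F₀(z₀) = 1` and `|F₀(z)| < 1` for `z ∈ Δ`, `z ≠ z₀`; in particular
`‖f₀‖_𝒵 = 1`. -/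
theorem stmt_6 (z₀ : ℂ) (hz₀ : z₀ ∈ unitDisc) (hz₀0 : z₀ ≠ 0)
    (f₀ : ℂ → ℂ)
    (hf₀ : ∀ z : ℂ, f₀ z = (1 - (‖z₀‖ : ℂ) ^ 2) * (-(1 / (starRingEnd ℂ) z₀)) *
      (z + (1 / (starRingEnd ℂ) z₀) * Complex.log (1 - (starRingEnd ℂ) z₀ * z))) :
    MemZ01 f₀ ∧
    (∀ z ∈ unitDisc, deriv (deriv f₀) z =
      (1 - (‖z₀‖ : ℂ) ^ 2) / (1 - (starRingEnd ℂ) z₀ * z) ^ 2) ∧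
    (1 - (‖z₀‖ : ℂ) ^ 2) * deriv (deriv f₀) z₀ = 1 ∧
    (∀ z ∈ unitDisc, z ≠ z₀ →
      ‖(1 - (‖z‖ : ℂ) ^ 2) * deriv (deriv f₀) z‖ < 1) ∧
    zygNorm f₀ = 1 := by
  obtain rfl : f₀ = peakFunction z₀ := funext hf₀
  have hz₀1 : ‖z₀‖ < 1 := mem_unitDisc.mp hz₀
  exact ⟨memZ01_peakFunction hz₀1 hz₀0,
    fun z hz => deriv_deriv_peakFunction hz₀0 (norm_conj_mul_lt_one hz₀1 (mem_unitDisc.mp hz).le),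
    one_sub_norm_sq_mul_deriv_deriv_peakFunction_self hz₀1 hz₀0,
    fun z hz hne => norm_one_sub_norm_sq_mul_deriv_deriv_peakFunction_lt_one hz₀1 hz₀0 hz hne,
    zygNorm_peakFunction hz₀1 hz₀0⟩
end
end

section
/- Let z₀ ∈ Δ and let F : Δ → ℂ be continuous with |F(z)| ≤ 1 for all z ∈ Δ and |F(z)| < 1 for all z ∈ Δ with z ≠ z₀. Let μ be a complex regular Borel measure on Δ with total variation ‖μ‖ ≤ 1 and ∫_Δ F dμ = 1. Then |μ|(Δ \ {z₀}) = 0 and μ({z₀})·F(z₀) = 1; in particular μ is a unimodular multiple of the Dirac measure at z₀. -/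
/-!
If `‖f‖ ≤ 1` and `‖∫ f dμ‖ = 1` for a measure of mass at most one, then
`1 = ‖∫ f‖ ≤ ∫ ‖f‖ ≤ μ(univ) ≤ 1`, so all these inequalities are equalities: `μ` has mass one
and `‖f‖ = 1` almost everywhere. Applied to `f = F g`, this forces `|μ|` to live where `|F| = 1`,
i.e. at `z₀`, so `|μ|` is the Dirac mass at `z₀` and `μ = g(z₀) δ_{z₀}`.
-/

open Complex MeasureTheory

noncomputable section

namespace MeasureTheory

variable {X E : Type*} [MeasurableSpace X] {μ : Measure X}

theorem measure_univ_eq_one_and_ae_norm_eq_one_of_norm_integral_eq_one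
    [NormedAddCommGroup E] [NormedSpace ℝ E] {f : X → E}
    (hμ : μ Set.univ ≤ 1) (hf : ∀ᵐ x ∂μ, ‖f x‖ ≤ 1) (h : ‖∫ x, f x ∂μ‖ = 1) :
    μ Set.univ = 1 ∧ ∀ᵐ x ∂μ, ‖f x‖ = 1 := by
  have : IsFiniteMeasure μ := ⟨hμ.trans_lt ENNReal.one_lt_top⟩
  have hfi : Integrable f μ := .of_integral_ne_zero fun h0 ↦ by simp [h0] at h
  have hle_mass : ∫ x, ‖f x‖ ∂μ ≤ μ.real Set.univ := by
    simpa using integral_mono_ae hfi.norm (integrable_const 1) hf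
  have hmass_le : μ.real Set.univ ≤ 1 := by
    simpa [Measure.real] using ENNReal.toReal_mono ENNReal.one_ne_top hμ
  have hone_le : 1 ≤ ∫ x, ‖f x‖ ∂μ := h ▸ norm_integral_le_integral_norm f
  have hmass : μ.real Set.univ = 1 := by linarith
  refine ⟨(ENNReal.toReal_eq_one_iff _).mp hmass, ?_⟩
  exact (integral_eq_iff_of_ae_le hfi.norm (integrable_const 1) hf).mp
    (by simp only [integral_const, smul_eq_mul, mul_one]; linarith)

theorem Measure.eq_smul_dirac_of_ae_eq {a : X} (h : ∀ᵐ x ∂μ, x = a) :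
    μ = μ Set.univ • Measure.dirac a :=
  calc μ = μ.map id := Measure.map_id.symm
    _ = μ.map fun _ ↦ a := Measure.map_congr h
    _ = μ Set.univ • Measure.dirac a := Measure.map_const μ a

end MeasureTheory

/-- The complex measure `μ` is encoded through its polar decomposition: a positive Borel
measure `ν = |μ|` together with a density `g` of modulus one, so that `μ(s) = ∫_s g dν`,
`|μ| = ν` and `‖μ‖ = ν(Δ)`. -/
theorem stmt_7_general (z₀ : ↥unitDisc) (F : ↥unitDisc → ℂ)
    (hFle : ∀ z, ‖F z‖ ≤ 1) (hFlt : ∀ z, z ≠ z₀ → ‖F z‖ < 1)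
    (ν : Measure ↥unitDisc)
    (g : ↥unitDisc → ℂ) (hg1 : ∀ z, ‖g z‖ = 1)
    (hμnorm : ν Set.univ ≤ 1)
    (hint : ∫ z, F z * g z ∂ν = 1) :
    ν ({z₀}ᶜ) = 0 ∧ (∫ z in ({z₀} : Set ↥unitDisc), g z ∂ν) * F z₀ = 1 ∧
      ∃ c : ℂ, ‖c‖ = 1 ∧ ∀ s : Set ↥unitDisc, MeasurableSet s →
        ∫ z in s, g z ∂ν = c * Set.indicator s (fun _ => (1 : ℂ)) z₀ := by
  obtain ⟨hν_univ, hFg_norm⟩ :=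
    measure_univ_eq_one_and_ae_norm_eq_one_of_norm_integral_eq_one (f := fun z ↦ F z * g z)
      hμnorm (ae_of_all _ fun z ↦ by simpa [hg1] using hFle z) (by simp [hint])
  have hconc : ∀ᵐ z ∂ν, z = z₀ := by
    filter_upwards [hFg_norm] with z hz
    by_contra hne
    simp only [norm_mul, hg1, mul_one] at hz
    exact (hFlt z hne).ne hz
  have hν : ν = Measure.dirac z₀ := by
    rw [Measure.eq_smul_dirac_of_ae_eq hconc, hν_univ, one_smul]
  refine ⟨ae_iff.mp hconc, ?_, g z₀, hg1 z₀, fun s _ ↦ ?_⟩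
  · subst hν
    rw [integral_dirac] at hint
    simpa [mul_comm] using hint
  · subst hν
    classical
    rw [setIntegral_dirac]
    by_cases hs : z₀ ∈ s <;> simp [hs]

/-- Let `z₀ ∈ Δ` and `F : Δ → ℂ` continuous with `|F| ≤ 1` on `Δ` and
`|F(z)| < 1` for `z ≠ z₀`. Let `μ` be a complex regular Borel measure on `Δ` with
`‖μ‖ ≤ 1` and `∫ F dμ = 1`. Then `|μ|(Δ \ {z₀}) = 0` and `μ({z₀})·F(z₀) = 1`; in
particular `μ` is a unimodular multiple of the Dirac measure at `z₀`.

The complex measure `μ` is encoded through its polar decomposition: a positive regular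
Borel measure `ν = |μ|` together with a Borel density `g` of modulus one, so that
`μ(s) = ∫_s g dν`, `|μ| = ν` and `‖μ‖ = ν(Δ)`. -/
theorem stmt_7 (z₀ : ↥unitDisc) (F : ↥unitDisc → ℂ) (hFcont : Continuous F)
    (hFle : ∀ z, ‖F z‖ ≤ 1) (hFlt : ∀ z, z ≠ z₀ → ‖F z‖ < 1)
    (ν : Measure ↥unitDisc) [IsFiniteMeasure ν] [ν.Regular]
    (g : ↥unitDisc → ℂ) (hg : Measurable g) (hg1 : ∀ z, ‖g z‖ = 1)
    (hμnorm : ν Set.univ ≤ 1)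
    (hint : ∫ z, F z * g z ∂ν = 1) :
    ν ({z₀}ᶜ) = 0 ∧ (∫ z in ({z₀} : Set ↥unitDisc), g z ∂ν) * F z₀ = 1 ∧
      ∃ c : ℂ, ‖c‖ = 1 ∧ ∀ s : Set ↥unitDisc, MeasurableSet s →
        ∫ z in s, g z ∂ν = c * Set.indicator s (fun _ => (1 : ℂ)) z₀ :=
  stmt_7_general z₀ F hFle hFlt ν g hg1 hμnorm hint
end
end

section
/- Let w, w₁ ∈ Δ and α, α₁ ∈ ℝ be such that (1−|w|²)e^{iα}f''(w) = (1−|w₁|²)e^{iα₁}f''(w₁) for every f ∈ 𝒵₀^{(0,1)}. Then w = w₁ and e^{iα} = e^{iα₁}. -/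
open Complex MeasureTheory

noncomputable section

/-!
Testing the identity on `z ↦ z²`, whose second derivative is the constant `2`, shows
`(1-|w|²)e^{iα} = (1-|w₁|²)e^{iα₁}`; this common factor is nonzero because `|w| < 1`.
Testing it on `z ↦ z³`, whose second derivative is `6z`, then gives `w = w₁`, and
cancelling `1-|w|²` leaves `e^{iα} = e^{iα₁}`.
-/

theorem zygVanish_of_norm_deriv_deriv_le_s6 {f : ℂ → ℂ} {C : ℝ}
    (hC : ∀ z : ℂ, ‖z‖ < 1 → ‖deriv (deriv f) z‖ ≤ C) : ZygVanish f := by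
  have hC₀ : 0 ≤ C := (norm_nonneg _).trans (hC 0 (by simp))
  intro ε hε
  set δ := ε / (2 * (C + 1))
  have hδ : 0 < δ := by positivity
  have hδC : δ * 2 * C < ε := by
    have : δ * (2 * (C + 1)) = ε := div_mul_cancel₀ ε (by positivity)
    nlinarith
  refine ⟨1 - δ, by linarith, fun z hr hz => ?_⟩
  have hweight₀ : 0 ≤ 1 - ‖z‖ ^ 2 := by nlinarith [norm_nonneg z]
  have hweight : 1 - ‖z‖ ^ 2 ≤ δ * 2 := by nlinarith [norm_nonneg z]
  calc (1 - ‖z‖ ^ 2) * ‖deriv (deriv f) z‖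
      ≤ (1 - ‖z‖ ^ 2) * C := by gcongr; exact hC z hz
    _ ≤ δ * 2 * C := by gcongr
    _ < ε := hδC

theorem deriv_pow_add_one (n : ℕ) :
    deriv (fun z : ℂ => z ^ (n + 1)) = fun z => ((n : ℂ) + 1) * z ^ n := by
  funext z
  simp

theorem deriv_deriv_pow_add_two (n : ℕ) :
    deriv (deriv fun z : ℂ => z ^ (n + 2)) = fun z => ((n : ℂ) + 2) * ((n : ℂ) + 1) * z ^ n := by
  rw [deriv_pow_add_one (n + 1)]
  funext z
  rw [deriv_const_mul_field, deriv_pow_add_one]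
  push_cast
  ring

theorem memZ01_pow_add_two (n : ℕ) : MemZ01 fun z : ℂ => z ^ (n + 2) := by
  refine ⟨⟨(differentiable_pow _).differentiableOn, (continuous_pow _).continuousOn,
    zygVanish_of_norm_deriv_deriv_le_s6 (C := (n + 2) * (n + 1)) fun z hz => ?_⟩, by simp, ?_⟩
  · rw [deriv_deriv_pow_add_two, norm_mul, norm_mul, norm_pow]
    have hzn : ‖z‖ ^ n ≤ 1 := pow_le_one₀ (norm_nonneg z) hz.le
    norm_cast
    simpa using mul_le_of_le_one_right (by positivity) hzn
  · rw [deriv_pow_add_one]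
    simp

theorem one_sub_norm_sq_ne_zero {w : ℂ} (hw : w ∈ unitDisc) : 1 - (‖w‖ : ℂ) ^ 2 ≠ 0 := by
  have hw' : ‖w‖ < 1 := by simpa [unitDisc] using hw
  norm_cast
  nlinarith [norm_nonneg w]

theorem stmt_8_general (w w₁ : ℂ) (hw : w ∈ unitDisc) (α α₁ : ℝ)
    (h : ∀ f : ℂ → ℂ, MemZ01 f →
      (1 - (‖w‖ : ℂ) ^ 2) * Complex.exp (Complex.I * α) * deriv (deriv f) w =
        (1 - (‖w₁‖ : ℂ) ^ 2) * Complex.exp (Complex.I * α₁) *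
          deriv (deriv f) w₁) :
    w = w₁ ∧ Complex.exp (Complex.I * α) = Complex.exp (Complex.I * α₁) := by
  set A := (1 - (‖w‖ : ℂ) ^ 2) * Complex.exp (Complex.I * α)
  set A₁ := (1 - (‖w₁‖ : ℂ) ^ 2) * Complex.exp (Complex.I * α₁)
  have hA : A ≠ 0 := mul_ne_zero (one_sub_norm_sq_ne_zero hw) (Complex.exp_ne_zero _)
  have hsq := h _ (memZ01_pow_add_two 0)
  have hcube := h _ (memZ01_pow_add_two 1)
  simp only [deriv_deriv_pow_add_two] at hsq hcube
  have hAA₁ : A = A₁ := by linear_combination hsq / 2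
  have hww₁ : w = w₁ := mul_left_cancel₀ hA (by linear_combination hcube / 6 - w₁ * hAA₁)
  subst hww₁
  exact ⟨rfl, mul_left_cancel₀ (one_sub_norm_sq_ne_zero hw) hAA₁⟩

/-- STATEMENT 8: If `(1-|w|²)e^{iα}f''(w) = (1-|w₁|²)e^{iα₁}f''(w₁)` for every
`f ∈ 𝒵₀^{(0,1)}`, with `w, w₁ ∈ Δ`, then `w = w₁` and `e^{iα} = e^{iα₁}`. -/
theorem stmt_8 (w w₁ : ℂ) (hw : w ∈ unitDisc) (hw₁ : w₁ ∈ unitDisc) (α α₁ : ℝ)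
    (h : ∀ f : ℂ → ℂ, MemZ01 f →
      (1 - (‖w‖ : ℂ) ^ 2) * Complex.exp (Complex.I * α) * deriv (deriv f) w =
        (1 - (‖w₁‖ : ℂ) ^ 2) * Complex.exp (Complex.I * α₁) *
          deriv (deriv f) w₁) :
    w = w₁ ∧ Complex.exp (Complex.I * α) = Complex.exp (Complex.I * α₁) :=
  stmt_8_general w w₁ hw α α₁ h
end
end

section
/- Let T be a surjective linear isometry of 𝒵₀^{(0,1)}, and suppose σ : Δ → Δ and Γ : Δ → {ζ ∈ ℂ : |ζ| = 1} satisfy (1−|z|²)(Tf)''(z) = Γ(z)·(1−|σ(z)|²)·f''(σ(z)) for all f ∈ 𝒵₀^{(0,1)} and z ∈ Δ. Then, writing f₀(z) = z²/2 and f₁(z) = z³/6, one has (Tf₀)''(z) ≠ 0 for every z ∈ Δ, σ(z) = (Tf₁)''(z)/(Tf₀)''(z) for every z ∈ Δ, and σ is a bijective holomorphic map of Δ onto itself. -/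
open Complex MeasureTheory

noncomputable section

/-! Testing the representation on `z²/2` and `z³/6`, whose second derivatives are `1` and `z`,
expresses `σ` as a quotient of two holomorphic functions. Testing it on the preimages of the
same two functions under `T` expresses `z` as a function of `σ z`, so `σ` is injective.
For surjectivity, fix `a ∈ Δ` and take `f` with `f'' = (1 - |a|²)/(1 - āz)²`; then
`(1 - |z|²)|f''(z)| = 1 - |φₐ(z)|²` with `φₐ(z) = (z - a)/(1 - āz)`, which is at most `1` with
equality only at `a`. The weighted second derivative of `T f` tends to `0` at the boundary, so it
attains its supremum `‖T f‖ = ‖f‖ = 1` at some `z`, and the representation forces `σ z = a`. -/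

namespace LittleZygmund

open Metric Set Topology ComplexConjugate

def zygWeight (f : ℂ → ℂ) (z : ℂ) : ℝ :=
  (1 - ‖z‖ ^ 2) * ‖deriv (deriv f) z‖

def IsWeightedCompOnDeriv2 (T : (ℂ → ℂ) → (ℂ → ℂ)) (σ Γ : ℂ → ℂ) : Prop :=
  ∀ f, MemZ01 f → ∀ z ∈ unitDisc,
    (1 - (‖z‖ : ℂ) ^ 2) * deriv (deriv (T f)) z =
      Γ z * ((1 - (‖σ z‖ : ℂ) ^ 2) * deriv (deriv f) (σ z))

lemma mem_unitDisc {z : ℂ} : z ∈ unitDisc ↔ ‖z‖ < 1 := mem_ball_zero_iff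

lemma norm_one_sub_ofReal_norm_sq {z : ℂ} (hz : ‖z‖ ≤ 1) :
    ‖1 - (‖z‖ : ℂ) ^ 2‖ = 1 - ‖z‖ ^ 2 := by
  rw [← ofReal_pow, ← ofReal_one, ← ofReal_sub, norm_real, Real.norm_of_nonneg]
  nlinarith [norm_nonneg z]

lemma one_sub_ofReal_norm_sq_ne_zero {z : ℂ} (hz : ‖z‖ < 1) : 1 - (‖z‖ : ℂ) ^ 2 ≠ 0 := by
  rw [← norm_ne_zero_iff, norm_one_sub_ofReal_norm_sq hz.le]
  nlinarith [norm_nonneg z]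

lemma mul_one_sub_ofReal_norm_sq_ne_zero {γ s : ℂ} (hγ : ‖γ‖ = 1) (hs : ‖s‖ < 1) :
    γ * (1 - (‖s‖ : ℂ) ^ 2) ≠ 0 :=
  mul_ne_zero (norm_ne_zero_iff.1 (by simp [hγ])) (one_sub_ofReal_norm_sq_ne_zero hs)

lemma deriv_deriv_congr_of_eqOn {F G : ℂ → ℂ} {s : Set ℂ} (hs : IsOpen s) (h : EqOn F G s)
    {z : ℂ} (hz : z ∈ s) : deriv (deriv F) z = deriv (deriv G) z :=
  (Filter.eventuallyEq_of_mem (hs.mem_nhds hz) h).deriv.deriv_eq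

lemma deriv_deriv_eq_of_hasDerivAt {g g' g'' : ℂ → ℂ} {s : Set ℂ} (hs : IsOpen s)
    (hg : ∀ w ∈ s, HasDerivAt g (g' w) w) (hg' : ∀ w ∈ s, HasDerivAt g' (g'' w) w)
    {w : ℂ} (hw : w ∈ s) : deriv (deriv g) w = g'' w := by
  have hderiv : deriv g =ᶠ[𝓝 w] g' :=
    Filter.eventually_of_mem (hs.mem_nhds hw) fun v hv => (hg v hv).deriv
  rw [hderiv.deriv_eq, (hg' w hw).deriv]

lemma zygVanish_of_norm_le {f : ℂ → ℂ} {C : ℝ}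
    (hC : ∀ z ∈ unitDisc, ‖deriv (deriv f) z‖ ≤ C) : ZygVanish f := by
  have hC0 : 0 ≤ C := (norm_nonneg _).trans (hC 0 (mem_ball_self one_pos))
  intro ε hε
  have hδ : 0 < ε / (2 * (C + 1)) := by positivity
  refine ⟨1 - ε / (2 * (C + 1)), by linarith, fun z hr hz => ?_⟩
  have hweight : 1 - ‖z‖ ^ 2 < ε / (C + 1) :=
    calc 1 - ‖z‖ ^ 2 ≤ 2 * (1 - ‖z‖) := by nlinarith [norm_nonneg z]
      _ < 2 * (ε / (2 * (C + 1))) := by linarith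
      _ = ε / (C + 1) := by field_simp
  calc (1 - ‖z‖ ^ 2) * ‖deriv (deriv f) z‖ ≤ (1 - ‖z‖ ^ 2) * (C + 1) := by
        gcongr
        · nlinarith [norm_nonneg z]
        · linarith [hC z (mem_unitDisc.2 hz)]
    _ < ε / (C + 1) * (C + 1) := by gcongr
    _ = ε := by field_simp

lemma memZ01_of_hasDerivAt {g g' g'' : ℂ → ℂ} {R C : ℝ} (hR : 1 < R)
    (hg : ∀ w ∈ ball (0 : ℂ) R, HasDerivAt g (g' w) w)
    (hg' : ∀ w ∈ ball (0 : ℂ) R, HasDerivAt g' (g'' w) w)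
    (hC : ∀ w ∈ unitDisc, ‖g'' w‖ ≤ C) (h0 : g 0 = 0) (h0' : g' 0 = 0) : MemZ01 g := by
  have hclosed : closedBall (0 : ℂ) 1 ⊆ ball 0 R := closedBall_subset_ball hR
  have hdisc : unitDisc ⊆ ball 0 R := ball_subset_closedBall.trans hclosed
  refine ⟨⟨fun w hw => (hg w (hdisc hw)).differentiableAt.differentiableWithinAt,
    fun w hw => (hg w (hclosed hw)).continuousAt.continuousWithinAt,
    zygVanish_of_norm_le (C := C) fun w hw => ?_⟩, h0, ?_⟩
  · rw [deriv_deriv_eq_of_hasDerivAt isOpen_ball hg hg' (hdisc hw)]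
    exact hC w hw
  · rw [(hg 0 (mem_ball_self (by linarith))).deriv, h0']

lemma hasDerivAt_sq_div_two (w : ℂ) : HasDerivAt (fun w : ℂ => w ^ 2 / 2) w w := by
  simpa using (hasDerivAt_pow 2 w).div_const 2

lemma hasDerivAt_cube_div_six (w : ℂ) : HasDerivAt (fun w : ℂ => w ^ 3 / 6) (w ^ 2 / 2) w := by
  refine ((hasDerivAt_pow 3 w).div_const 6).congr_deriv ?_
  norm_num
  ring

lemma deriv_deriv_sq_div_two (z : ℂ) : deriv (deriv fun w : ℂ => w ^ 2 / 2) z = 1 :=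
  deriv_deriv_eq_of_hasDerivAt (g'' := fun _ => 1) isOpen_univ
    (fun w _ => hasDerivAt_sq_div_two w) (fun w _ => hasDerivAt_id w) (mem_univ z)

lemma deriv_deriv_cube_div_six (z : ℂ) : deriv (deriv fun w : ℂ => w ^ 3 / 6) z = z :=
  deriv_deriv_eq_of_hasDerivAt isOpen_univ
    (fun w _ => hasDerivAt_cube_div_six w) (fun w _ => hasDerivAt_sq_div_two w) (mem_univ z)

lemma memZ01_sq_div_two : MemZ01 fun w : ℂ => w ^ 2 / 2 :=
  memZ01_of_hasDerivAt (g'' := fun _ => 1) (R := 2) (C := 1) one_lt_two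
    (fun w _ => hasDerivAt_sq_div_two w) (fun w _ => hasDerivAt_id w) (fun _ _ => by simp)
    (by simp) rfl

lemma memZ01_cube_div_six : MemZ01 fun w : ℂ => w ^ 3 / 6 :=
  memZ01_of_hasDerivAt (R := 2) (C := 1) one_lt_two
    (fun w _ => hasDerivAt_cube_div_six w) (fun w _ => hasDerivAt_sq_div_two w)
    (fun w hw => (mem_unitDisc.1 hw).le) (by simp) (by simp)

lemma hasDerivAt_log_primitive {c w : ℂ} (hc : c ≠ 0) (hw : 1 - c * w ∈ slitPlane) :
    HasDerivAt (fun w => -(c * w + log (1 - c * w)) / c ^ 2) (w / (1 - c * w)) w := by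
  have hlin : HasDerivAt (fun w => c * w) c w := by simpa using (hasDerivAt_id w).const_mul c
  have hlog := (hlin.const_sub 1).clog hw
  refine ((hlin.add hlog).neg.div_const (c ^ 2)).congr_deriv ?_
  field_simp [slitPlane_ne_zero hw]
  ring

lemma hasDerivAt_div_one_sub_mul {c w : ℂ} (hw : 1 - c * w ≠ 0) :
    HasDerivAt (fun w => w / (1 - c * w)) (1 / (1 - c * w) ^ 2) w := by
  have hlin : HasDerivAt (fun w => c * w) c w := by simpa using (hasDerivAt_id w).const_mul c
  refine ((hasDerivAt_id w).div (hlin.const_sub 1) hw).congr_deriv ?_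
  simp only [id]
  field_simp
  ring

lemma exists_hasDerivAt_hasDerivAt_div_sq (K c : ℂ) (hc : ‖c‖ < 1) :
    ∃ R > 1, ∃ g g' : ℂ → ℂ, (∀ w ∈ ball (0 : ℂ) R, HasDerivAt g (g' w) w) ∧
      (∀ w ∈ ball (0 : ℂ) R, HasDerivAt g' (K / (1 - c * w) ^ 2) w) ∧ g 0 = 0 ∧ g' 0 = 0 := by
  rcases eq_or_ne c 0 with rfl | hc0
  · refine ⟨2, one_lt_two, fun w => K * (w ^ 2 / 2), fun w => K * w,
      fun w _ => (hasDerivAt_sq_div_two w).const_mul K, fun w _ => ?_, by simp, by simp⟩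
    simpa using (hasDerivAt_id w).const_mul K
  · have hcpos : 0 < ‖c‖ := norm_pos_iff.2 hc0
    have hcw : ∀ w ∈ ball (0 : ℂ) ‖c‖⁻¹, ‖c * w‖ < 1 := fun w hw => by
      rw [norm_mul, ← lt_div_iff₀' hcpos, one_div]
      exact mem_ball_zero_iff.1 hw
    refine ⟨‖c‖⁻¹, one_lt_inv₀ hcpos |>.2 hc, fun w => K * (-(c * w + log (1 - c * w)) / c ^ 2),
      fun w => K * (w / (1 - c * w)), fun w hw => ?_, fun w hw => ?_, by simp, by simp⟩
    · have hslit := mem_slitPlane_of_norm_lt_one (z := -(c * w)) (by simpa using hcw w hw)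
      exact (hasDerivAt_log_primitive hc0 (by rwa [← sub_eq_add_neg] at hslit)).const_mul K
    · have hne : 1 - c * w ≠ 0 := sub_ne_zero.2 fun h => by simpa [← h] using hcw w hw
      exact ((hasDerivAt_div_one_sub_mul hne).const_mul K).congr_deriv (mul_one_div _ _)

lemma one_sub_norm_le_norm_one_sub_mul {c w : ℂ} (hw : ‖w‖ < 1) : 1 - ‖c‖ ≤ ‖1 - c * w‖ :=
  calc 1 - ‖c‖ ≤ 1 - ‖c * w‖ := by
        rw [norm_mul]
        nlinarith [norm_nonneg c, norm_nonneg w]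
    _ ≤ ‖1 - c * w‖ := by simpa using norm_sub_norm_le (1 : ℂ) (c * w)

lemma exists_memZ01_deriv_deriv_eq_div_sq (K c : ℂ) (hc : ‖c‖ < 1) :
    ∃ g, MemZ01 g ∧ ∀ w ∈ unitDisc, deriv (deriv g) w = K / (1 - c * w) ^ 2 := by
  obtain ⟨R, hR, g, g', hg, hg', h0, h0'⟩ := exists_hasDerivAt_hasDerivAt_div_sq K c hc
  have hdisc : unitDisc ⊆ ball 0 R := ball_subset_ball hR.le
  refine ⟨g, memZ01_of_hasDerivAt (C := ‖K‖ / (1 - ‖c‖) ^ 2) hR hg hg' (fun w hw => ?_) h0 h0',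
    fun w hw => deriv_deriv_eq_of_hasDerivAt isOpen_ball hg hg' (hdisc hw)⟩
  rw [norm_div, norm_pow]
  gcongr
  exact one_sub_norm_le_norm_one_sub_mul (mem_unitDisc.1 hw)

lemma one_sub_conj_mul_ne_zero {a w : ℂ} (ha : ‖a‖ < 1) (hw : ‖w‖ < 1) : 1 - conj a * w ≠ 0 := by
  rw [← norm_pos_iff]
  have := one_sub_norm_le_norm_one_sub_mul (c := conj a) hw
  rw [norm_conj] at this
  linarith

lemma normSq_one_sub_conj_mul (a w : ℂ) :
    normSq (1 - conj a * w) = (1 - normSq a) * (1 - normSq w) + normSq (w - a) := by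
  simp only [normSq_apply, mul_re, mul_im, sub_re, sub_im, one_re, one_im, conj_re, conj_im]
  ring

lemma one_sub_sq_mul_norm_div_sq_eq {a w : ℂ} (ha : ‖a‖ < 1) (hw : ‖w‖ < 1) :
    (1 - ‖w‖ ^ 2) * ‖(1 - (‖a‖ : ℂ) ^ 2) / (1 - conj a * w) ^ 2‖ =
      1 - ‖w - a‖ ^ 2 / ‖1 - conj a * w‖ ^ 2 := by
  have hne := norm_ne_zero_iff.2 (one_sub_conj_mul_ne_zero ha hw)
  have hid := normSq_one_sub_conj_mul a w
  simp only [← Complex.sq_norm] at hid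
  rw [norm_div, norm_pow, norm_one_sub_ofReal_norm_sq ha.le]
  field_simp
  linarith

lemma exists_memZ01_zygSup_eq_one_peak {a : ℂ} (ha : a ∈ unitDisc) :
    ∃ f, MemZ01 f ∧ zygSup f = 1 ∧ ∀ w ∈ unitDisc, zygWeight f w = 1 → w = a := by
  have ha' := mem_unitDisc.1 ha
  obtain ⟨f, hf, hf''⟩ :=
    exists_memZ01_deriv_deriv_eq_div_sq (1 - (‖a‖ : ℂ) ^ 2) (conj a) (by rwa [norm_conj])
  have hweight : ∀ w ∈ unitDisc,
      zygWeight f w = 1 - ‖w - a‖ ^ 2 / ‖1 - conj a * w‖ ^ 2 := fun w hw => by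
    rw [zygWeight, hf'' w hw, one_sub_sq_mul_norm_div_sq_eq ha' (mem_unitDisc.1 hw)]
  have hgreatest : IsGreatest (zygWeight f '' unitDisc) 1 := by
    refine ⟨⟨a, ha, by simp [hweight a ha]⟩, forall_mem_image.2 fun w hw => ?_⟩
    rw [hweight w hw]
    exact sub_le_self _ (by positivity)
  refine ⟨f, hf, hgreatest.csSup_eq, fun w hw hw1 => ?_⟩
  rw [hweight w hw, sub_eq_self, div_eq_zero_iff] at hw1
  have hden := one_sub_conj_mul_ne_zero ha' (mem_unitDisc.1 hw)
  simpa [sub_eq_zero, hden] using hw1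

lemma continuousOn_zygWeight {f : ℂ → ℂ} (hf : DifferentiableOn ℂ f unitDisc) :
    ContinuousOn (zygWeight f) unitDisc :=
  (continuous_const.sub (continuous_norm.pow 2)).continuousOn.mul
    ((hf.deriv isOpen_ball).deriv isOpen_ball).continuousOn.norm

lemma exists_forall_zygWeight_le_max {f : ℂ → ℂ} (hf : DifferentiableOn ℂ f unitDisc)
    (hv : ZygVanish f) {ε : ℝ} (hε : 0 < ε) :
    ∃ z₀ ∈ unitDisc, ∀ z ∈ unitDisc, zygWeight f z ≤ max (zygWeight f z₀) ε := by
  obtain ⟨r, hr1, hr⟩ := hv ε hε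
  have hK : closedBall (0 : ℂ) (max r 0) ⊆ unitDisc := closedBall_subset_ball (max_lt hr1 one_pos)
  obtain ⟨z₀, hz₀, hmax⟩ := (isCompact_closedBall (0 : ℂ) (max r 0)).exists_isMaxOn
    ⟨0, mem_closedBall_self (le_max_right r 0)⟩ ((continuousOn_zygWeight hf).mono hK)
  refine ⟨z₀, hK hz₀, fun z hz => ?_⟩
  by_cases hzr : ‖z‖ ≤ max r 0
  · exact (hmax (mem_closedBall_zero_iff.2 hzr)).trans (le_max_left _ _)
  · exact (hr z ((le_max_left r 0).trans_lt (not_le.1 hzr)) (mem_unitDisc.1 hz)).le.trans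
      (le_max_right _ _)

lemma exists_zygWeight_eq_zygSup {f : ℂ → ℂ} (hf : DifferentiableOn ℂ f unitDisc)
    (hv : ZygVanish f) (hpos : 0 < zygSup f) : ∃ z ∈ unitDisc, zygWeight f z = zygSup f := by
  obtain ⟨z₀, hz₀, hle⟩ := exists_forall_zygWeight_le_max hf hv (half_pos hpos)
  have hbdd : BddAbove (zygWeight f '' unitDisc) := ⟨_, forall_mem_image.2 hle⟩
  have hsup : zygSup f ≤ max (zygWeight f z₀) (zygSup f / 2) :=
    csSup_le ((nonempty_ball.2 one_pos).image _) (forall_mem_image.2 hle)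
  refine ⟨z₀, hz₀, le_antisymm (le_csSup hbdd (mem_image_of_mem _ hz₀)) ?_⟩
  rcases le_max_iff.1 hsup with h | h
  · exact h
  · linarith

namespace IsWeightedCompOnDeriv2

variable {T : (ℂ → ℂ) → (ℂ → ℂ)} {σ Γ : ℂ → ℂ}

lemma zygWeight_eq (hT : IsWeightedCompOnDeriv2 T σ Γ) (hσ : MapsTo σ unitDisc unitDisc)
    (hΓ : ∀ z ∈ unitDisc, ‖Γ z‖ = 1) {f : ℂ → ℂ} (hf : MemZ01 f) {z : ℂ} (hz : z ∈ unitDisc) :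
    zygWeight (T f) z = zygWeight f (σ z) := by
  have h := congrArg norm (hT f hf z hz)
  rwa [norm_mul, norm_mul, norm_mul, hΓ z hz, one_mul,
    norm_one_sub_ofReal_norm_sq (mem_unitDisc.1 hz).le,
    norm_one_sub_ofReal_norm_sq (mem_unitDisc.1 (hσ hz)).le] at h

lemma deriv_deriv_ne_zero_and_eq_div (hT : IsWeightedCompOnDeriv2 T σ Γ)
    (hσ : MapsTo σ unitDisc unitDisc) (hΓ : ∀ z ∈ unitDisc, ‖Γ z‖ = 1) {z : ℂ}
    (hz : z ∈ unitDisc) :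
    deriv (deriv (T fun w => w ^ 2 / 2)) z ≠ 0 ∧
      σ z = deriv (deriv (T fun w => w ^ 3 / 6)) z / deriv (deriv (T fun w => w ^ 2 / 2)) z := by
  have h₀ := hT _ memZ01_sq_div_two z hz
  have h₁ := hT _ memZ01_cube_div_six z hz
  rw [deriv_deriv_sq_div_two, mul_one] at h₀
  rw [deriv_deriv_cube_div_six] at h₁
  have hr := one_sub_ofReal_norm_sq_ne_zero (mem_unitDisc.1 hz)
  have hp := mul_one_sub_ofReal_norm_sq_ne_zero (hΓ z hz) (mem_unitDisc.1 (hσ hz))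
  have hA₀ : deriv (deriv (T fun w => w ^ 2 / 2)) z ≠ 0 := by
    rintro h
    rw [h, mul_zero] at h₀
    exact hp h₀.symm
  refine ⟨hA₀, (eq_div_iff hA₀).2 (mul_left_cancel₀ hr ?_)⟩
  linear_combination σ z * h₀ - h₁

lemma injOn (hT : IsWeightedCompOnDeriv2 T σ Γ) (hσ : MapsTo σ unitDisc unitDisc)
    (hΓ : ∀ z ∈ unitDisc, ‖Γ z‖ = 1)
    (hsurj : ∀ g, MemZ01 g → ∃ f, MemZ01 f ∧ ∀ z ∈ unitDisc, T f z = g z) :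
    InjOn σ unitDisc := by
  obtain ⟨G₀, hG₀, hTG₀⟩ := hsurj _ memZ01_sq_div_two
  obtain ⟨G₁, hG₁, hTG₁⟩ := hsurj _ memZ01_cube_div_six
  refine LeftInvOn.injOn (f₁' := fun s => deriv (deriv G₁) s / deriv (deriv G₀) s)
    fun z hz => ?_
  have h₀ := hT G₀ hG₀ z hz
  have h₁ := hT G₁ hG₁ z hz
  rw [deriv_deriv_congr_of_eqOn isOpen_ball hTG₀ hz, deriv_deriv_sq_div_two, mul_one] at h₀
  rw [deriv_deriv_congr_of_eqOn isOpen_ball hTG₁ hz, deriv_deriv_cube_div_six] at h₁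
  have hr := one_sub_ofReal_norm_sq_ne_zero (mem_unitDisc.1 hz)
  have hB₀ : deriv (deriv G₀) (σ z) ≠ 0 := by
    rintro h
    rw [h, mul_zero, mul_zero] at h₀
    exact hr h₀
  have hp := mul_one_sub_ofReal_norm_sq_ne_zero (hΓ z hz) (mem_unitDisc.1 (hσ hz))
  refine ((eq_div_iff hB₀).2 (mul_left_cancel₀ hp ?_)).symm
  linear_combination h₁ - z * h₀

lemma surjOn (hT : IsWeightedCompOnDeriv2 T σ Γ) (hσ : MapsTo σ unitDisc unitDisc)
    (hΓ : ∀ z ∈ unitDisc, ‖Γ z‖ = 1) (hmap : ∀ f, MemZ01 f → MemZ01 (T f))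
    (hiso : ∀ f, MemZ01 f → zygSup (T f) = zygSup f) :
    SurjOn σ unitDisc unitDisc := by
  intro a ha
  obtain ⟨f, hf, hsup, hpeak⟩ := exists_memZ01_zygSup_eq_one_peak ha
  have hTsup : zygSup (T f) = 1 := (hiso f hf).trans hsup
  obtain ⟨z, hz, hmax⟩ :=
    exists_zygWeight_eq_zygSup (hmap f hf).1.1 (hmap f hf).1.2.2 (hTsup ▸ one_pos)
  refine ⟨z, hz, hpeak (σ z) (hσ hz) ?_⟩
  rw [← hT.zygWeight_eq hσ hΓ hf hz, hmax, hTsup]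

end IsWeightedCompOnDeriv2

end LittleZygmund

theorem stmt_9_general (T : (ℂ → ℂ) → (ℂ → ℂ))
    (hmap : ∀ f, MemZ01 f → MemZ01 (T f))
    (hsurj : ∀ g, MemZ01 g → ∃ f, MemZ01 f ∧ ∀ z ∈ unitDisc, T f z = g z)
    (hiso : ∀ f, MemZ01 f → zygSup (T f) = zygSup f)
    (σ : ℂ → ℂ) (hσmap : ∀ z ∈ unitDisc, σ z ∈ unitDisc)
    (Γ : ℂ → ℂ) (hΓ : ∀ z ∈ unitDisc, ‖Γ z‖ = 1)
    (heq : ∀ f, MemZ01 f → ∀ z ∈ unitDisc,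
      (1 - (‖z‖ : ℂ) ^ 2) * deriv (deriv (T f)) z =
        Γ z * ((1 - (‖σ z‖ : ℂ) ^ 2) * deriv (deriv f) (σ z))) :
    (∀ z ∈ unitDisc, deriv (deriv (T fun w => w ^ 2 / 2)) z ≠ 0) ∧
    (∀ z ∈ unitDisc, σ z =
      deriv (deriv (T fun w => w ^ 3 / 6)) z / deriv (deriv (T fun w => w ^ 2 / 2)) z) ∧
    DifferentiableOn ℂ σ unitDisc ∧ Set.BijOn σ unitDisc unitDisc := by
  have hT : LittleZygmund.IsWeightedCompOnDeriv2 T σ Γ := heq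
  have hformula := fun z (hz : z ∈ unitDisc) => hT.deriv_deriv_ne_zero_and_eq_div hσmap hΓ hz
  have hholo : ∀ {f}, MemZ01 f → DifferentiableOn ℂ (deriv (deriv (T f))) unitDisc :=
    fun hf => ((hmap _ hf).1.1.deriv Metric.isOpen_ball).deriv Metric.isOpen_ball
  refine ⟨fun z hz => (hformula z hz).1, fun z hz => (hformula z hz).2, ?_,
    hσmap, hT.injOn hσmap hΓ hsurj, hT.surjOn hσmap hΓ hmap hiso⟩
  have hquot := (hholo LittleZygmund.memZ01_cube_div_six).div
    (hholo LittleZygmund.memZ01_sq_div_two) fun z hz => (hformula z hz).1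
  exact hquot.congr fun z hz => (hformula z hz).2

/-- STATEMENT 9: Let `T` be a surjective linear isometry of `𝒵₀^{(0,1)}` and suppose
`σ : Δ → Δ` and a unimodular `Γ : Δ → 𝕊¹` satisfy
`(1-|z|²)(Tf)''(z) = Γ(z)(1-|σ(z)|²)f''(σ(z))` for all `f ∈ 𝒵₀^{(0,1)}`, `z ∈ Δ`. Then,
with `f₀(z) = z²/2` and `f₁(z) = z³/6`, `(Tf₀)''(z) ≠ 0` on `Δ`,
`σ(z) = (Tf₁)''(z)/(Tf₀)''(z)` on `Δ`, and `σ` is a bijective holomorphic map of `Δ`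
onto itself. -/
theorem stmt_9 (T : (ℂ → ℂ) → (ℂ → ℂ))
    (hmap : ∀ f, MemZ01 f → MemZ01 (T f))
    (hadd : ∀ f g, MemZ01 f → MemZ01 g → ∀ z ∈ unitDisc, T (f + g) z = T f z + T g z)
    (hsmul : ∀ (c : ℂ) (f), MemZ01 f → ∀ z ∈ unitDisc, T (c • f) z = c * T f z)
    (hsurj : ∀ g, MemZ01 g → ∃ f, MemZ01 f ∧ ∀ z ∈ unitDisc, T f z = g z)
    (hiso : ∀ f, MemZ01 f → zygSup (T f) = zygSup f)
    (σ : ℂ → ℂ) (hσmap : ∀ z ∈ unitDisc, σ z ∈ unitDisc)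
    (Γ : ℂ → ℂ) (hΓ : ∀ z ∈ unitDisc, ‖Γ z‖ = 1)
    (heq : ∀ f, MemZ01 f → ∀ z ∈ unitDisc,
      (1 - (‖z‖ : ℂ) ^ 2) * deriv (deriv (T f)) z =
        Γ z * ((1 - (‖σ z‖ : ℂ) ^ 2) * deriv (deriv f) (σ z))) :
    (∀ z ∈ unitDisc, deriv (deriv (T fun w => w ^ 2 / 2)) z ≠ 0) ∧
    (∀ z ∈ unitDisc, σ z =
      deriv (deriv (T fun w => w ^ 3 / 6)) z / deriv (deriv (T fun w => w ^ 2 / 2)) z) ∧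
    DifferentiableOn ℂ σ unitDisc ∧ Set.BijOn σ unitDisc unitDisc :=
  stmt_9_general T hmap hsurj hiso σ hσmap Γ hΓ heq
end
end
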